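/- The vector field F₈(x,y,z) = (−yz, xz, xz) on ℝ³ admits the positive-definite quadratic first integral I(x,y,z) = x² + y² + (y−z)²; hence all integral curves are bounded and F₈ is complete. -/

import Mathlib

/-- The geodesic field `F₈` of `Q₈` on `aff(ℝ) ⊕ ℝ` (`λ = 0`): `(−yz, xz, xz)`. -/
def F8aff (v : Fin 3 → ℝ) : Fin 3 → ℝ := ![-(v 1 * v 2), v 0 * v 2, v 0 * v 2]

/-!
`y - z` is conserved, so an orbit lies in a plane `y - z = c`, where `(x, y)` moves on a circle
of radius `r` with angular velocity `y - c`, i.e. its angle obeys `θ' = r sin θ - c`. Halving the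
angle linearises this Riccati-type equation: if `p' = M p` with `M = [[0, c/2], [-c/2, r]]`, then
`θ = 2 arg p` solves it. The linear flow `exp (t M) p₀` exists for all time and never vanishes,
which gives a global solution, and it is bounded because `I` is conserved and positive definite.
-/

open NormedSpace

def f8Integral (v : Fin 3 → ℝ) : ℝ := v 0 ^ 2 + v 1 ^ 2 + (v 1 - v 2) ^ 2

theorem hasDerivAt_f8Integral_comp {γ : ℝ → Fin 3 → ℝ} {t : ℝ}
    (hγ : HasDerivAt γ (F8aff (γ t)) t) : HasDerivAt (fun u => f8Integral (γ u)) 0 t := by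
  have hx : HasDerivAt (fun u => γ u 0) (-(γ t 1 * γ t 2)) t := by
    simpa [F8aff] using hasDerivAt_pi.1 hγ 0
  have hy : HasDerivAt (fun u => γ u 1) (γ t 0 * γ t 2) t := by
    simpa [F8aff] using hasDerivAt_pi.1 hγ 1
  have hz : HasDerivAt (fun u => γ u 2) (γ t 0 * γ t 2) t := by
    simpa [F8aff] using hasDerivAt_pi.1 hγ 2
  exact (((hx.pow 2).add (hy.pow 2)).add ((hy.sub hz).pow 2)).congr_deriv (by ring)

theorem f8Integral_pos {v : Fin 3 → ℝ} (hv : v ≠ 0) : 0 < f8Integral v := by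
  contrapose! hv
  unfold f8Integral at hv
  have h0 : v 0 = 0 := by nlinarith [sq_nonneg (v 0), sq_nonneg (v 1), sq_nonneg (v 1 - v 2)]
  have h1 : v 1 = 0 := by nlinarith [sq_nonneg (v 0), sq_nonneg (v 1), sq_nonneg (v 1 - v 2)]
  have h2 : v 2 = 0 := by nlinarith [sq_nonneg (v 0), sq_nonneg (v 1), sq_nonneg (v 1 - v 2)]
  ext i
  fin_cases i <;> assumption

theorem f8Integral_eq_of_forall_hasDerivAt {γ : ℝ → Fin 3 → ℝ}
    (hγ : ∀ t, HasDerivAt γ (F8aff (γ t)) t) (t : ℝ) : f8Integral (γ t) = f8Integral (γ 0) :=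
  is_const_of_deriv_eq_zero (fun u => (hasDerivAt_f8Integral_comp (hγ u)).differentiableAt)
    (fun u => (hasDerivAt_f8Integral_comp (hγ u)).deriv) t 0

theorem norm_le_sqrt_two_mul_f8Integral (v : Fin 3 → ℝ) : ‖v‖ ≤ √(2 * f8Integral v) := by
  refine (pi_norm_le_iff_of_nonneg (Real.sqrt_nonneg _)).2 fun i => ?_
  rw [Real.norm_eq_abs]
  apply Real.abs_le_sqrt
  unfold f8Integral
  fin_cases i <;> simp only [Fin.zero_eta, Fin.mk_one, Fin.reduceFinMk, Fin.isValue] <;>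
    nlinarith [sq_nonneg (v 0), sq_nonneg (v 1), sq_nonneg (v 1 - v 2), sq_nonneg (2 * v 1 - v 2)]

section LinearFlow

variable {E : Type*} [NormedAddCommGroup E] [NormedSpace ℝ E] [CompleteSpace E]

theorem hasDerivAt_exp_smul_apply (A : E →L[ℝ] E) (p₀ : E) (t : ℝ) :
    HasDerivAt (fun u : ℝ => exp (u • A) p₀) (A (exp (t • A) p₀)) t := by
  simpa using (hasDerivAt_exp_smul_const' A t).clm_apply (hasDerivAt_const t p₀)

theorem exp_apply_ne_zero (A : E →L[ℝ] E) {p₀ : E} (hp₀ : p₀ ≠ 0) : exp A p₀ ≠ 0 := by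
  let _ : NormedAlgebra ℚ (E →L[ℝ] E) := NormedAlgebra.restrictScalars ℚ ℝ _
  obtain ⟨u, hu⟩ := isUnit_exp A
  intro h
  have h' := congr_arg (↑u⁻¹ : E →L[ℝ] E) h
  rw [← hu, ← mul_apply_eq_comp, u.inv_mul, map_zero] at h'
  exact hp₀ h'

end LinearFlow

noncomputable def doublingGenerator (r c : ℝ) : (Fin 2 → ℝ) →L[ℝ] Fin 2 → ℝ :=
  LinearMap.toContinuousLinearMap (Matrix.toLin' !![0, c / 2; -(c / 2), r])

theorem doublingGenerator_apply_zero (r c : ℝ) (p : Fin 2 → ℝ) :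
    doublingGenerator r c p 0 = c / 2 * p 1 := by
  simp [doublingGenerator, Matrix.mulVec, dotProduct, Fin.sum_univ_two]

theorem doublingGenerator_apply_one (r c : ℝ) (p : Fin 2 → ℝ) :
    doublingGenerator r c p 1 = -(c / 2) * p 0 + r * p 1 := by
  simp [doublingGenerator, Matrix.mulVec, dotProduct, Fin.sum_univ_two]

/-- The point at angle `2 arg p` on the circle of radius `r` in the plane `y - z = c`. -/
noncomputable def doubleAngleLift (r c : ℝ) (p : Fin 2 → ℝ) : Fin 3 → ℝ :=
  ![r * (p 0 ^ 2 - p 1 ^ 2) / (p 0 ^ 2 + p 1 ^ 2), 2 * r * p 0 * p 1 / (p 0 ^ 2 + p 1 ^ 2),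
    2 * r * p 0 * p 1 / (p 0 ^ 2 + p 1 ^ 2) - c]

theorem sq_add_sq_ne_zero_of_ne_zero {p : Fin 2 → ℝ} (hp : p ≠ 0) : p 0 ^ 2 + p 1 ^ 2 ≠ 0 := by
  contrapose! hp
  have h0 : p 0 = 0 := by nlinarith [sq_nonneg (p 0), sq_nonneg (p 1)]
  have h1 : p 1 = 0 := by nlinarith [sq_nonneg (p 0), sq_nonneg (p 1)]
  ext i
  fin_cases i <;> assumption

theorem hasDerivAt_doubleAngleLift {p : ℝ → Fin 2 → ℝ} {r c t : ℝ}
    (hp : HasDerivAt p (doublingGenerator r c (p t)) t) (hpt : p t ≠ 0) :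
    HasDerivAt (fun u => doubleAngleLift r c (p u)) (F8aff (doubleAngleLift r c (p t))) t := by
  have ha : HasDerivAt (fun u => p u 0) (c / 2 * p t 1) t := by
    simpa [doublingGenerator_apply_zero] using hasDerivAt_pi.1 hp 0
  have hb : HasDerivAt (fun u => p u 1) (-(c / 2) * p t 0 + r * p t 1) t := by
    simpa [doublingGenerator_apply_one] using hasDerivAt_pi.1 hp 1
  have hn := sq_add_sq_ne_zero_of_ne_zero hpt
  have hnorm := (ha.pow 2).add (hb.pow 2)
  set Y := 2 * r * p t 0 * p t 1 / (p t 0 ^ 2 + p t 1 ^ 2)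
  have hX : HasDerivAt (fun u => r * (p u 0 ^ 2 - p u 1 ^ 2) / (p u 0 ^ 2 + p u 1 ^ 2))
      (-(Y * (Y - c))) t :=
    (((ha.pow 2).sub (hb.pow 2)).const_mul r |>.div hnorm hn).congr_deriv (by
      simp only [Y, Pi.add_apply, Pi.sub_apply, Pi.pow_apply]; field_simp; ring)
  have hY : HasDerivAt (fun u => 2 * r * p u 0 * p u 1 / (p u 0 ^ 2 + p u 1 ^ 2))
      (r * (p t 0 ^ 2 - p t 1 ^ 2) / (p t 0 ^ 2 + p t 1 ^ 2) * (Y - c)) t :=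
    ((ha.const_mul (2 * r)).mul hb |>.div hnorm hn).congr_deriv (by
      simp only [Y, Pi.add_apply, Pi.pow_apply, Pi.mul_apply]; field_simp; ring)
  refine hasDerivAt_pi.2 fun i => ?_
  fin_cases i
  · simpa [doubleAngleLift, F8aff] using hX
  · simpa [doubleAngleLift, F8aff] using hY
  · simpa [doubleAngleLift, F8aff] using hY.sub_const c

theorem doubleAngleLift_sq_add_sq (c : ℝ) {p : Fin 2 → ℝ} (hp : p ≠ 0) :
    doubleAngleLift (p 0 ^ 2 + p 1 ^ 2) c p =
      ![p 0 ^ 2 - p 1 ^ 2, 2 * p 0 * p 1, 2 * p 0 * p 1 - c] := by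
  have hn := sq_add_sq_ne_zero_of_ne_zero hp
  ext i
  fin_cases i <;>
    simp only [doubleAngleLift, Fin.zero_eta, Fin.mk_one, Fin.reduceFinMk, Fin.isValue,
      Matrix.cons_val, Matrix.cons_val_zero, Matrix.cons_val_one, sub_left_inj] <;> field_simp

theorem exists_sq_sub_sq_eq_and_two_mul_eq (x y : ℝ) :
    ∃ p : Fin 2 → ℝ, p 0 ^ 2 - p 1 ^ 2 = x ∧ 2 * p 0 * p 1 = y := by
  obtain ⟨w, hw⟩ := IsAlgClosed.exists_pow_nat_eq (⟨x, y⟩ : ℂ) two_pos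
  have hre := congr_arg Complex.re hw
  have him := congr_arg Complex.im hw
  simp only [sq, Complex.mul_re, Complex.mul_im] at hre him
  exact ⟨![w.re, w.im], by simp [sq, hre], by
    simp only [Matrix.cons_val_zero, Matrix.cons_val_one, Matrix.cons_val_fin_one]; linarith⟩

theorem exists_hasDerivAt_F8aff (v : Fin 3 → ℝ) :
    ∃ γ : ℝ → Fin 3 → ℝ, γ 0 = v ∧ ∀ t, HasDerivAt γ (F8aff (γ t)) t := by
  by_cases hv : v 0 = 0 ∧ v 1 = 0
  · refine ⟨fun _ => v, rfl, fun t => ?_⟩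
    have hF : F8aff v = 0 := by
      ext i
      fin_cases i <;> simp [F8aff, hv.1, hv.2]
    simpa [hF] using hasDerivAt_const t v
  obtain ⟨p₀, hx, hy⟩ := exists_sq_sub_sq_eq_and_two_mul_eq (v 0) (v 1)
  have hp₀ : p₀ ≠ 0 := by
    rintro rfl
    exact hv ⟨by simpa using hx.symm, by simpa using hy.symm⟩
  -- `p₀` is a square root of `v 0 + i v 1`, so `r = |p₀|²` is the radius of the orbit.
  set r := p₀ 0 ^ 2 + p₀ 1 ^ 2
  set A := doublingGenerator r (v 1 - v 2)
  refine ⟨fun t => doubleAngleLift r (v 1 - v 2) (exp (t • A) p₀), ?_, fun t => ?_⟩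
  · simp only [zero_smul, exp_zero, one_apply_eq_self]
    rw [doubleAngleLift_sq_add_sq _ hp₀, hx, hy]
    ext i
    fin_cases i <;> simp
  · exact hasDerivAt_doubleAngleLift (hasDerivAt_exp_smul_apply A p₀ t) (exp_apply_ne_zero _ hp₀)

/-- `I = x² + y² + (y−z)²` is a positive-definite quadratic first integral of
`F₈`; hence all integral curves are bounded and `F₈` is complete. -/
theorem stmt_7 :
    (∀ (γ : ℝ → Fin 3 → ℝ) (t : ℝ), HasDerivAt γ (F8aff (γ t)) t →
        HasDerivAt (fun u => (γ u 0) ^ 2 + (γ u 1) ^ 2 + (γ u 1 - γ u 2) ^ 2) 0 t) ∧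
    (∀ v : Fin 3 → ℝ, v ≠ 0 → 0 < (v 0) ^ 2 + (v 1) ^ 2 + (v 1 - v 2) ^ 2) ∧
    (∀ v : Fin 3 → ℝ, ∃ γ : ℝ → Fin 3 → ℝ, γ 0 = v ∧
        (∀ t, HasDerivAt γ (F8aff (γ t)) t) ∧ ∃ C, ∀ t, ‖γ t‖ ≤ C) := by
  refine ⟨fun γ t hγ => hasDerivAt_f8Integral_comp hγ, fun v hv => f8Integral_pos hv, fun v => ?_⟩
  obtain ⟨γ, hγ0, hγ⟩ := exists_hasDerivAt_F8aff v
  refine ⟨γ, hγ0, hγ, √(2 * f8Integral v), fun t => ?_⟩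
  rw [← hγ0, ← f8Integral_eq_of_forall_hasDerivAt hγ t]
  exact norm_le_sqrt_two_mul_f8Integral (γ t)
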